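/- Let G be a finite group whose Sylow 2-subgroup G_2 is generalized quaternion, and let P ⊆ G_2 be a 2-centric subgroup of G. Then 4 does not divide [N_G(P) : P]. -/

import Mathlib

/-- `H` is a Sylow `p`-subgroup of `K` (as subgroups of an ambient group `G`):
`H` is a `p`-subgroup of `K` maximal among `p`-subgroups of `K`. -/
def IsSylowIn {G : Type*} [Group G] (p : ℕ) (H K : Subgroup G) : Prop :=
  H ≤ K ∧ IsPGroup p H ∧ ∀ Q : Subgroup G, Q ≤ K → IsPGroup p Q → H ≤ Q → Q = H

/-- `P` is `p`-centric in `G`: `P` is a `p`-group and `Z(P) = P ⊓ C_G(P)` is a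
Sylow `p`-subgroup of the centralizer `C_G(P)`. -/
def IsPCentric {G : Type*} [Group G] (p : ℕ) (P : Subgroup G) : Prop :=
  IsPGroup p P ∧
    IsSylowIn p (P ⊓ Subgroup.centralizer (P : Set G)) (Subgroup.centralizer (P : Set G))

/-- `P` is principal `p`-radical in `G`: `P` is `p`-centric and
`N_G(P)/(P C_G(P))` has no non-trivial normal `p`-subgroup (stated without
quotients: any `N_G(P)`-invariant subgroup `Q` with `P C_G(P) ≤ Q ≤ N_G(P)`
whose image mod `P C_G(P)` is a `p`-group equals `P C_G(P)`). -/
def IsPrincipalPRadical {G : Type*} [Group G] (p : ℕ) (P : Subgroup G) : Prop :=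
  IsPCentric p P ∧ ∀ Q : Subgroup G,
    P ⊔ Subgroup.centralizer (P : Set G) ≤ Q → Q ≤ (Subgroup.normalizer (P : Set G)) →
    (∀ n ∈ (Subgroup.normalizer (P : Set G)), ∀ q ∈ Q, n * q * n⁻¹ ∈ Q) →
    (∀ q ∈ Q, ∃ k : ℕ, q ^ p ^ k ∈ P ⊔ Subgroup.centralizer (P : Set G)) →
    Q = P ⊔ Subgroup.centralizer (P : Set G)

/-- A group has rank at most 2 at the prime `p`: it contains no elementary
abelian subgroup `(ℤ/p)^3`. -/
def NoRankThree (p : ℕ) (G : Type*) [Group G] : Prop :=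
  ¬ ∃ f : Multiplicative (ZMod p × ZMod p × ZMod p) →* G, Function.Injective f

/-! Let `S` be a Sylow 2-subgroup of `N_G(P)` containing `P`: it carries the 2-part of
`[N_G(P) : P]`, it embeds into `G_2`, `P` is normal in `S`, and by 2-centricity `C_S(P) ≤ P`.
In a generalized quaternion group the cyclic subgroup of index 2 is inverted by every element
outside it; pulled back to `S` this gives a cyclic `A` of index at most 2 with the same property.
If `P ≤ A` then `A` centralizes `P`, so `A ≤ P`. Otherwise some `p ∈ P` inverts `A`, so every
`a ∈ A` has `a ^ 2 = [a, p] ∈ P`, while squares outside `A` are central, hence in `P`; thus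
`S ⧸ P` is a cyclic quotient of `A` of exponent 2. Either way `[S : P] ≤ 2`. -/

open Subgroup

-- `mul_mem_of_notMem` says that `A` has index at most 2.
structure Subgroup.IsInvertedCyclic {S : Type*} [Group S] (A : Subgroup S) : Prop where
  isCyclic : IsCyclic A
  mul_mem_of_notMem : ∀ x y, x ∉ A → y ∉ A → x * y ∈ A
  conj_eq_inv : ∀ x ∉ A, ∀ a ∈ A, x * a * x⁻¹ = a⁻¹

namespace Subgroup

variable {S T : Type*} [Group S] [Group T]

lemma index_le_two_of_forall_mul_mem {H : Subgroup S}
    (hH : ∀ x y, x ∉ H → y ∉ H → x * y ∈ H) : H.index ≤ 2 := by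
  by_cases htop : H = ⊤
  · simp [htop]
  obtain ⟨a, ha⟩ : ∃ a, a ∉ H := by simpa [eq_top_iff'] using htop
  refine (index_eq_two_iff_exists_notMem_and.2 ⟨a, ha, fun b => ?_⟩).le
  by_cases hb : b ∈ H
  · exact .inr hb
  · exact .inl (hH b a hb ha)

namespace IsInvertedCyclic

variable {A : Subgroup S}

lemma comap (hA : A.IsInvertedCyclic) {f : T →* S} (hf : Function.Injective f) :
    (A.comap f).IsInvertedCyclic where
  isCyclic :=
    have := hA.isCyclic
    isCyclic_of_injective (f.subgroupComap A) fun x y h => Subtype.ext (hf congr(($h : S)))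
  mul_mem_of_notMem x y hx hy := by
    simpa using hA.mul_mem_of_notMem (f x) (f y) hx hy
  conj_eq_inv x hx a ha := hf (by simpa using hA.conj_eq_inv (f x) hx (f a) ha)

lemma commute_of_mem (hA : A.IsInvertedCyclic) {a b : S} (ha : a ∈ A) (hb : b ∈ A) :
    Commute a b := by
  have := hA.isCyclic
  exact congr_arg Subtype.val (IsCyclic.commGroup.mul_comm ⟨a, ha⟩ ⟨b, hb⟩)

lemma commute_sq_of_notMem (hA : A.IsInvertedCyclic) {x : S} (hx : x ∉ A) (y : S) :
    Commute (x ^ 2) y := by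
  have hx2 : x ^ 2 ∈ A := by simpa [sq] using hA.mul_mem_of_notMem x x hx hx
  by_cases hy : y ∈ A
  · exact hA.commute_of_mem hx2 hy
  -- `x` both fixes and inverts `x ^ 2`, so `x ^ 2` is an involution, which every `y ∉ A` fixes.
  have hinv : (x ^ 2)⁻¹ = x ^ 2 := by
    rw [← hA.conj_eq_inv x hx _ hx2]; group
  have := hA.conj_eq_inv y hy _ hx2
  rw [hinv, mul_inv_eq_iff_eq_mul] at this
  exact this.symm

lemma sq_mem_of_not_le (hA : A.IsInvertedCyclic) {P : Subgroup S} [P.Normal]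
    (hP : centralizer (P : Set S) ≤ P) (hPA : ¬ P ≤ A) (s : S) : s ^ 2 ∈ P := by
  obtain ⟨p, hpP, hpA⟩ := SetLike.not_le_iff_exists.1 hPA
  by_cases hs : s ∈ A
  · have hcomm : s ^ 2 = s * p * s⁻¹ * p⁻¹ := by
      have := hA.conj_eq_inv p hpA _ (inv_mem hs)
      rw [inv_inv] at this
      rw [mul_assoc (s * p), mul_assoc s, ← mul_assoc p, this, sq]
    rw [hcomm]
    exact mul_mem (Normal.conj_mem inferInstance p hpP s) (inv_mem hpP)
  · exact hP (mem_centralizer_iff.2 fun y _ => (hA.commute_sq_of_notMem hs y).symm)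

theorem index_le_two_of_centralizer_le (hA : A.IsInvertedCyclic) (P : Subgroup S) [P.Normal]
    (hP : centralizer (P : Set S) ≤ P) : P.index ≤ 2 := by
  by_cases hPA : P ≤ A
  · have hAP : A ≤ P := fun a ha =>
      hP (mem_centralizer_iff.2 fun y hy => hA.commute_of_mem (hPA hy) ha)
    exact index_le_two_of_forall_mul_mem fun x y hx hy =>
      hAP (hA.mul_mem_of_notMem x y (mt (@hAP x) hx) (mt (@hAP y) hy))
  obtain ⟨p, hpP, hpA⟩ := SetLike.not_le_iff_exists.1 hPA
  -- `S = A ∪ p A` with `p ∈ P`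
  have hsurj : Function.Surjective ((QuotientGroup.mk' P).comp A.subtype) := by
    refine QuotientGroup.mk_surjective.forall.2 fun s => ?_
    by_cases hs : s ∈ A
    · exact ⟨⟨s, hs⟩, rfl⟩
    refine ⟨⟨p⁻¹ * s, hA.mul_mem_of_notMem _ _ (inv_mem_iff.not.2 hpA) hs⟩, ?_⟩
    simp [hpP]
  have := hA.isCyclic
  have := isCyclic_of_surjective _ hsurj
  rw [index, ← IsCyclic.exponent_eq_card]
  refine Nat.le_of_dvd two_pos (Monoid.exponent_dvd_of_forall_pow_eq_one fun g => ?_)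
  induction g using QuotientGroup.induction_on with
  | H s =>
    rw [← QuotientGroup.mk_pow, QuotientGroup.eq_one_iff]
    exact hA.sq_mem_of_not_le hP hPA s

end IsInvertedCyclic

end Subgroup

namespace QuaternionGroup

def cyclicSubgroup (n : ℕ) : Subgroup (QuaternionGroup n) :=
  (MonoidHom.mk' (fun i : Multiplicative (ZMod (2 * n)) => a i.toAdd)
    fun _ _ => (a_mul_a _ _).symm).range

lemma mem_cyclicSubgroup {n : ℕ} {g : QuaternionGroup n} :
    g ∈ cyclicSubgroup n ↔ ∃ i, g = a i :=
  ⟨fun ⟨i, hi⟩ => ⟨i.toAdd, hi.symm⟩, fun ⟨i, hi⟩ => ⟨.ofAdd i, hi.symm⟩⟩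

lemma isInvertedCyclic_cyclicSubgroup (n : ℕ) : (cyclicSubgroup n).IsInvertedCyclic where
  isCyclic := isCyclic_of_surjective _ (MonoidHom.rangeRestrict_surjective _)
  mul_mem_of_notMem x y hx hy := by
    cases x <;> cases y <;> simp_all [mem_cyclicSubgroup, xa_mul_xa]
  conj_eq_inv x hx b hb := by
    obtain ⟨j, rfl⟩ := mem_cyclicSubgroup.1 hb
    cases x with
    | a i => exact absurd (mem_cyclicSubgroup.2 ⟨i, rfl⟩) hx
    | xa i =>
      have h2n : ((2 * n : ℕ) : ZMod (2 * n)) = 0 := ZMod.natCast_self _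
      show xa i * a j * xa ((n : ZMod (2 * n)) + i) = a (-j)
      rw [xa_mul_a, xa_mul_xa]
      congr 1
      push_cast at h2n
      linear_combination h2n

end QuaternionGroup

namespace IsPGroup

variable {G : Type*} [Group G] [Finite G] {p : ℕ} [Fact p.Prime]

lemma exists_between_relIndex_dvd {P K : Subgroup G} (hP : IsPGroup p P) (hPK : P ≤ K) :
    ∃ S : Subgroup G, P ≤ S ∧ S ≤ K ∧ IsPGroup p S ∧
      ∀ k, p ^ k ∣ P.relIndex K → p ^ k ∣ P.relIndex S := by
  obtain ⟨Q, hQ⟩ := (hP.of_equiv (subgroupOfEquivOfLe hPK).symm).exists_le_sylow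
  have hPQ : P ≤ (Q : Subgroup K).map K.subtype := by
    simpa [subgroupOf_map_subtype, hPK] using map_mono (f := K.subtype) hQ
  refine ⟨_, hPQ, map_subtype_le _, Q.2.map _, fun k hk => ?_⟩
  have hQK : ((Q : Subgroup K).map K.subtype).relIndex K = Q.index := by
    rw [relIndex, subgroupOf, comap_map_eq_self_of_injective K.subtype_injective]
  rw [← relIndex_mul_relIndex _ _ _ hPQ (map_subtype_le _), hQK] at hk
  exact (Nat.Coprime.pow_left k ((Nat.Prime.coprime_iff_not_dvd Fact.out).2
    Q.not_dvd_index)).dvd_of_dvd_mul_right hk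

lemma exists_injective_sylow {S : Subgroup G} (hS : IsPGroup p S) (Q : Sylow p G) :
    ∃ f : S →* Q, Function.Injective f := by
  obtain ⟨R, hR⟩ := hS.exists_le_sylow
  exact ⟨(R.equiv Q).toMonoidHom.comp (inclusion hR),
    (R.equiv Q).injective.comp (inclusion_injective hR)⟩

end IsPGroup

lemma IsPCentric.centralizer_subgroupOf_le {G : Type*} [Group G] {p : ℕ} {P S : Subgroup G}
    (hP : IsPCentric p P) (hPS : P ≤ S) (hS : IsPGroup p S) :
    centralizer (P.subgroupOf S : Set S) ≤ P.subgroupOf S := by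
  intro s hs
  have hsC : (s : G) ∈ centralizer (P : Set G) := mem_centralizer_iff.2 fun h hh =>
    congr_arg Subtype.val (mem_centralizer_iff.1 hs ⟨h, hPS hh⟩ (mem_subgroupOf.2 hh))
  have hmax : S ⊓ centralizer (P : Set G) = P ⊓ centralizer (P : Set G) :=
    hP.2.2.2 _ inf_le_right hS.to_inf_left (inf_le_inf_right _ hPS)
  have : (s : G) ∈ P ⊓ centralizer (P : Set G) := hmax ▸ ⟨s.2, hsC⟩
  exact mem_subgroupOf.2 this.1

theorem stmt6_general {G : Type*} [Group G] [Fintype G] (Gp : Sylow 2 G)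
    (hquat : ∃ n : ℕ, 3 ≤ n ∧
      Nonempty (↥(Gp : Subgroup G) ≃* QuaternionGroup (2 ^ (n - 2))))
    (P : Subgroup G) (hcen : IsPCentric 2 P) :
    ¬ (4 ∣ P.relIndex (Subgroup.normalizer (P : Set G))) := by
  obtain ⟨n, -, ⟨e⟩⟩ := hquat
  intro h4
  obtain ⟨S, hPS, hSN, hS, hdvd⟩ := hcen.1.exists_between_relIndex_dvd (le_normalizer (H := P))
  obtain ⟨φ, hφ⟩ := hS.exists_injective_sylow Gp
  have hA := (QuaternionGroup.isInvertedCyclic_cyclicSubgroup _).comap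
    (f := e.toMonoidHom.comp φ) (e.injective.comp hφ)
  have := (normal_subgroupOf_iff_le_normalizer hPS).2 hSN
  have hle : P.relIndex S ≤ 2 :=
    hA.index_le_two_of_centralizer_le _ (hcen.centralizer_subgroupOf_le hPS hS)
  have hpos : 0 < P.relIndex S := Nat.pos_of_ne_zero index_ne_zero_of_finite
  have := Nat.le_of_dvd hpos (hdvd 2 h4)
  omega

theorem stmt6 {G : Type*} [Group G] [Fintype G] (Gp : Sylow 2 G)
    (hquat : ∃ n : ℕ, 3 ≤ n ∧
      Nonempty (↥(Gp : Subgroup G) ≃* QuaternionGroup (2 ^ (n - 2))))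
    (P : Subgroup G) (hle : P ≤ (Gp : Subgroup G)) (hcen : IsPCentric 2 P) :
    ¬ (4 ∣ P.relIndex (Subgroup.normalizer (P : Set G))) :=
  stmt6_general Gp hquat P hcen
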